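/- Let a, b ∈ ℝ with a ≠ 0 and b² < a². If either λ1² + λ4² = λ2² + λ3², or b² < α2·a² (where α2 is the larger real root of f̃), then the quartic polynomial P(z) = u·z⁴ + v·z² + w has a complex root z with strictly positive real part (spectral instability of the equilibrium (b,0,0,a,0,0)). -/

import Mathlib

/-!
Put `y = z²`. Since `u > 0`, the quadratic `u y² + v y + w` has a root off `(-∞, 0]` as soon as
`v < 0` or its discriminant is negative, and a square root of that `y` with positive real part
is the required `z`.

With `N = λ1λ2 − λ3λ4`, `R = λ1λ3 − λ2λ4`, `M = λ1λ4 − λ2λ3` one has `E1 = NR + M²`,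
`E2 = NR − M²`, and the discriminant factors as `4 ((λ1+λ4)(λ2+λ3))⁶ M² a⁴ f̃(b²/a²)`, while `v`
has the sign of `b²/a² − S/T`. Because `S/T` exceeds the midpoint of `α1` and `α2`, for
`b² < α2 a²` either `v < 0` or `α1 < b²/a² < α2`, where `f̃ < 0`. If `M = 0` the discriminant
vanishes, but then `S/T` is a root of `f̃`, so `S/T = α2` and `v < 0`. Finally, when
`λ1² + λ4² = λ2² + λ3²`, `1` is a root of `f̃`, so `α2 ≥ 1 > b²/a²`.
-/

theorem Complex.exists_sq_eq_re_pos_of_mem_slitPlane {y : ℂ} (hy : y ∈ slitPlane) :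
    ∃ z : ℂ, z ^ 2 = y ∧ 0 < z.re := by
  obtain ⟨z, rfl⟩ := IsAlgClosed.exists_pow_nat_eq y two_pos
  have hre : z.re ≠ 0 := by
    intro h0
    simp only [pow_two, mem_slitPlane_iff, mul_re, h0, mul_zero, zero_sub, Left.neg_pos_iff,
      mul_im, zero_mul, add_zero, ne_eq, not_true_eq_false, or_false] at hy
    exact (mul_self_nonneg z.im).not_gt hy
  rcases hre.lt_or_gt with hneg | hpos
  · exact ⟨-z, neg_sq z, by simpa using hneg⟩
  · exact ⟨z, rfl, hpos⟩

theorem exists_quadratic_root_mem_slitPlane {u v w : ℝ} (hu : 0 < u)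
    (h : v < 0 ∨ discrim u v w < 0) :
    ∃ y : ℂ, u * (y * y) + v * y + w = 0 ∧ y ∈ Complex.slitPlane := by
  rcases le_or_gt 0 (discrim u v w) with hd | hd
  · have hv : v < 0 := h.resolve_right hd.not_gt
    set y := (-v + √(discrim u v w)) / (2 * u)
    have hy : u * (y * y) + v * y + w = 0 :=
      (quadratic_eq_zero_iff hu.ne' (Real.mul_self_sqrt hd).symm y).2 (Or.inl rfl)
    have hy_pos : 0 < y := div_pos (by linarith [Real.sqrt_nonneg (discrim u v w)]) (by linarith)
    exact ⟨y, by exact_mod_cast hy, Complex.ofReal_mem_slitPlane.2 hy_pos⟩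
  · set r := √(-discrim u v w)
    have hr : r * r = -discrim u v w := Real.mul_self_sqrt (by linarith)
    have hs : discrim (u : ℂ) v w = (r * Complex.I) * (r * Complex.I) := by
      have hr' : (r : ℂ) * r = -discrim (u : ℂ) v w := by
        simp only [discrim] at hr ⊢; exact_mod_cast hr
      linear_combination (-(r : ℂ) ^ 2) * Complex.I_sq + hr'
    refine ⟨(-v + r * Complex.I) / (2 * u),
      (quadratic_eq_zero_iff (by exact_mod_cast hu.ne') hs _).2 (Or.inl rfl), ?_⟩
    rw [Complex.mem_slitPlane_iff]
    right
    have hr_pos : 0 < r := Real.sqrt_pos.2 (by linarith)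
    have : ((-v + r * Complex.I) / (2 * u) : ℂ).im = r / (2 * u) := by
      rw [show (2 * u : ℂ) = ((2 * u : ℝ) : ℂ) by push_cast; ring, Complex.div_ofReal_im]
      simp
    rw [this]; positivity

theorem exists_biquadratic_root_re_pos {u v w : ℝ} (hu : 0 < u) (h : v < 0 ∨ discrim u v w < 0) :
    ∃ z : ℂ, (u : ℂ) * z ^ 4 + (v : ℂ) * z ^ 2 + (w : ℂ) = 0 ∧ 0 < z.re := by
  obtain ⟨y, hy, hslit⟩ := exists_quadratic_root_mem_slitPlane hu h
  obtain ⟨z, rfl, hz⟩ := Complex.exists_sq_eq_re_pos_of_mem_slitPlane hslit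
  exact ⟨z, by linear_combination hy, hz⟩

theorem quadratic_vieta {R : Type*} [CommRing R] [IsDomain R] {A B C α β : R} (hαβ : α ≠ β)
    (hα : A * α ^ 2 + B * α + C = 0) (hβ : A * β ^ 2 + B * β + C = 0) :
    A * (α + β) = -B ∧ A * (α * β) = C := by
  have hsum : A * (α + β) = -B := by
    have : (α - β) * (A * (α + β) + B) = 0 := by linear_combination hα - hβ
    linear_combination (mul_eq_zero.1 this).resolve_left (sub_ne_zero.2 hαβ)
  exact ⟨hsum, by linear_combination α * hsum - hα⟩

namespace SO4

variable (l1 l2 l3 l4 : ℝ)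

structure Admissible : Prop where
  lt12 : l2 < l1
  lt23 : l3 < l2
  lt34 : l4 < l3
  add12 : 0 < l1 + l2
  add13 : 0 < l1 + l3
  add14 : 0 < l1 + l4
  add23 : 0 < l2 + l3
  add24 : 0 < l2 + l4
  add34 : 0 < l3 + l4

def E1 : ℝ := (l1^2 + l2*l3) * (l4^2 + l2*l3) - l1*l4 * (l2 + l3)^2

def E2 : ℝ := -((l2^2 + l1*l4) * (l3^2 + l1*l4)) + l2*l3 * (l1 + l4)^2

def S : ℝ := (l2 + l3)^2 * E2 l1 l2 l3 l4

def T : ℝ := (l1 + l4)^2 * E1 l1 l2 l3 l4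

/-- The paper's `f̃`, homogenised: `f̃ t = fTilde l1 l2 l3 l4 t 1`. -/
def fTilde (x y : ℝ) : ℝ :=
  (l1^2 - l4^2)^2 * x^2
    - 2 * ((l1^2 - l2^2) * (l3^2 - l4^2) + (l1^2 - l3^2) * (l2^2 - l4^2)) * x * y
    + (l2^2 - l3^2)^2 * y^2

variable {l1 l2 l3 l4} {α1 α2 : ℝ}

theorem discrim_eq (A B : ℝ) :
    discrim ((l1+l2)*(l1+l3)*(l1+l4)^4*(l2+l3)^4*(l2+l4)*(l3+l4))
      (-2*(l1+l4)^2*(l2+l3)^2*(S l1 l2 l3 l4 * A - T l1 l2 l3 l4 * B))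
      ((l1-l2)*(l1-l3)*(l2-l4)*(l3-l4)*((l2+l3)^2*A - (l1+l4)^2*B)^2)
      = 4 * ((l1+l4)*(l2+l3))^6 * (l1*l4 - l2*l3)^2 * fTilde l1 l2 l3 l4 B A := by
  have hX : S l1 l2 l3 l4 * A - T l1 l2 l3 l4 * B
      = (l1*l2 - l3*l4) * (l1*l3 - l2*l4) * ((l2+l3)^2*A - (l1+l4)^2*B)
        - (l1*l4 - l2*l3)^2 * ((l2+l3)^2*A + (l1+l4)^2*B) := by
    unfold S T E1 E2; ring
  have hu : (l1+l2)*(l1+l3)*(l1+l4)^4*(l2+l3)^4*(l2+l4)*(l3+l4)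
      = (l1+l2)*(l1+l3)*(l2+l4)*(l3+l4) * ((l1+l4)^2*(l2+l3)^2)^2 := by ring
  have hpq : (l1+l2)*(l1+l3)*(l2+l4)*(l3+l4) * ((l1-l2)*(l1-l3)*(l2-l4)*(l3-l4))
      = ((l1*l3 - l2*l4)^2 - (l1*l4 - l2*l3)^2) * ((l1*l2 - l3*l4)^2 - (l1*l4 - l2*l3)^2) := by
    ring
  have hF : ((l1*l2 - l3*l4) * ((l2+l3)^2*A - (l1+l4)^2*B)
        - (l1*l3 - l2*l4) * ((l2+l3)^2*A + (l1+l4)^2*B))^2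
      - (((l2+l3)^2*A + (l1+l4)^2*B)^2 - ((l2+l3)^2*A - (l1+l4)^2*B)^2)
        * ((l1*l3 - l2*l4)^2 - (l1*l4 - l2*l3)^2)
      = (l1+l4)^2*(l2+l3)^2 * fTilde l1 l2 l3 l4 B A := by
    unfold fTilde; ring
  rw [hX, hu, discrim, show -2*(l1+l4)^2*(l2+l3)^2 = -2*((l1+l4)^2*(l2+l3)^2) by ring,
    show ((l1+l4)*(l2+l3))^6 = ((l1+l4)^2*(l2+l3)^2)^3 by ring]
  -- Abstracting these factors keeps the last step small; `ring` on the fully expanded identity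
  -- in `l1, …, l4` does not terminate in reasonable time.
  generalize (l1+l4)^2*(l2+l3)^2 = c at *
  generalize (l1+l2)*(l1+l3)*(l2+l4)*(l3+l4) = Q at *
  generalize (l1-l2)*(l1-l3)*(l2-l4)*(l3-l4) = P at *
  generalize (l2+l3)^2*A - (l1+l4)^2*B = G at *
  generalize (l2+l3)^2*A + (l1+l4)^2*B = H at *
  generalize l1*l2 - l3*l4 = N at *
  generalize l1*l3 - l2*l4 = R at *
  generalize l1*l4 - l2*l3 = M at *
  linear_combination (-4*c^2*G^2) * hpq + 4*c^2*M^2 * hF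

theorem fTilde_vieta (hα : α1 ≠ α2) (hr1 : fTilde l1 l2 l3 l4 α1 1 = 0)
    (hr2 : fTilde l1 l2 l3 l4 α2 1 = 0) :
    (l1^2 - l4^2)^2 * (α1 + α2)
        = 2 * ((l1^2 - l2^2) * (l3^2 - l4^2) + (l1^2 - l3^2) * (l2^2 - l4^2))
      ∧ (l1^2 - l4^2)^2 * (α1 * α2) = (l2^2 - l3^2)^2 := by
  unfold fTilde at hr1 hr2
  obtain ⟨hsum, hprod⟩ :=
    quadratic_vieta (A := (l1^2 - l4^2)^2) (C := (l2^2 - l3^2)^2)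
      (B := -2 * ((l1^2 - l2^2) * (l3^2 - l4^2) + (l1^2 - l3^2) * (l2^2 - l4^2)))
      hα (by linear_combination hr1) (by linear_combination hr2)
  exact ⟨by linear_combination hsum, hprod⟩

theorem fTilde_eq_mul_of_roots (hα : α1 ≠ α2) (hr1 : fTilde l1 l2 l3 l4 α1 1 = 0)
    (hr2 : fTilde l1 l2 l3 l4 α2 1 = 0) (x y : ℝ) :
    fTilde l1 l2 l3 l4 x y = (l1^2 - l4^2)^2 * (x - α1 * y) * (x - α2 * y) := by
  obtain ⟨hsum, hprod⟩ := fTilde_vieta hα hr1 hr2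
  unfold fTilde
  linear_combination (x * y) * hsum - y ^ 2 * hprod

namespace Admissible

theorem E1_pos (h : Admissible l1 l2 l3 l4) : 0 < E1 l1 l2 l3 l4 := by
  have hN : 0 < l1*l2 - l3*l4 := by
    linarith [mul_pos (sub_pos.2 (h.lt23.trans h.lt12)) h.add24,
      mul_pos h.add13 (sub_pos.2 (h.lt34.trans h.lt23))]
  have hR : 0 < l1*l3 - l2*l4 := by
    linarith [mul_pos (sub_pos.2 h.lt12) h.add34, mul_pos h.add12 (sub_pos.2 h.lt34)]
  have hE1 : E1 l1 l2 l3 l4 = (l1*l2 - l3*l4) * (l1*l3 - l2*l4) + (l1*l4 - l2*l3)^2 := by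
    unfold E1; ring
  rw [hE1]
  exact add_pos_of_pos_of_nonneg (mul_pos hN hR) (sq_nonneg _)

theorem T_pos (h : Admissible l1 l2 l3 l4) : 0 < T l1 l2 l3 l4 :=
  mul_pos (pow_pos h.add14 2) h.E1_pos

theorem sq_sub_sq_sq_pos (h : Admissible l1 l2 l3 l4) : 0 < (l1^2 - l4^2)^2 :=
  pow_pos (sub_pos.2 (sq_lt_sq' (by linarith [h.add14]) (by linarith [h.lt12, h.lt23, h.lt34]))) 2

theorem u_pos (h : Admissible l1 l2 l3 l4) :
    0 < (l1+l2)*(l1+l3)*(l1+l4)^4*(l2+l3)^4*(l2+l4)*(l3+l4) := by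
  have := h.add12; have := h.add13; have := h.add14; have := h.add23; have := h.add24
  have := h.add34
  positivity

theorem alpha1_mul_T_lt_S (h : Admissible l1 l2 l3 l4) (hα : α1 < α2)
    (hr1 : fTilde l1 l2 l3 l4 α1 1 = 0) (hr2 : fTilde l1 l2 l3 l4 α2 1 = 0) :
    α1 * T l1 l2 l3 l4 < S l1 l2 l3 l4 := by
  have hpq : 0 < (l1^2 - l2^2) * (l3^2 - l4^2) * ((l1^2 - l3^2) * (l2^2 - l4^2)) := by
    have h12 := sub_pos.2 (sq_lt_sq' (by linarith [h.add12]) h.lt12)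
    have h34 := sub_pos.2 (sq_lt_sq' (by linarith [h.add34]) h.lt34)
    have h13 := sub_pos.2 (sq_lt_sq' (by linarith [h.add13]) (h.lt23.trans h.lt12))
    have h24 := sub_pos.2 (sq_lt_sq' (by linarith [h.add24]) (h.lt34.trans h.lt23))
    positivity
  -- `S/T` exceeds the midpoint `(α1 + α2)/2` of the roots of `f̃`.
  have hmid : (l1^2 - l4^2)^2 * S l1 l2 l3 l4
      - ((l1^2 - l2^2) * (l3^2 - l4^2) + (l1^2 - l3^2) * (l2^2 - l4^2)) * T l1 l2 l3 l4
      = 2 * (l1 + l4)^2 * ((l1^2 - l2^2) * (l3^2 - l4^2) * ((l1^2 - l3^2) * (l2^2 - l4^2))) := by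
    unfold S T E1 E2; ring
  have key : (l1^2 - l4^2)^2 * (S l1 l2 l3 l4 - α1 * T l1 l2 l3 l4)
      = 2 * (l1 + l4)^2 * ((l1^2 - l2^2) * (l3^2 - l4^2) * ((l1^2 - l3^2) * (l2^2 - l4^2)))
        + T l1 l2 l3 l4 * (l1^2 - l4^2)^2 * (α2 - α1) / 2 := by
    linear_combination hmid - T l1 l2 l3 l4 / 2 * (fTilde_vieta hα.ne hr1 hr2).1
  have : 0 < (l1^2 - l4^2)^2 * (S l1 l2 l3 l4 - α1 * T l1 l2 l3 l4) := by
    rw [key]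
    have := h.T_pos; have := h.sq_sub_sq_sq_pos; have := sub_pos.2 hα
    positivity
  exact sub_pos.1 (pos_of_mul_pos_right this h.sq_sub_sq_sq_pos.le)

theorem S_eq_alpha2_mul_T (h : Admissible l1 l2 l3 l4) (hα : α1 < α2)
    (hr1 : fTilde l1 l2 l3 l4 α1 1 = 0) (hr2 : fTilde l1 l2 l3 l4 α2 1 = 0)
    (hM : l1 * l4 = l2 * l3) : S l1 l2 l3 l4 = α2 * T l1 l2 l3 l4 := by
  -- `fTilde S T` is `-4 ((λ1+λ4)(λ2+λ3))² M²` times the product of the four `λi² − λj²`.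
  have hroot : fTilde l1 l2 l3 l4 (S l1 l2 l3 l4) (T l1 l2 l3 l4) = 0 := by
    unfold fTilde S T E1 E2
    linear_combination (-4 * ((l1^2 - l2^2) * (l3^2 - l4^2) * ((l1^2 - l3^2) * (l2^2 - l4^2)))
      * (l1 + l4)^2 * (l2 + l3)^2 * (l1 * l4 - l2 * l3)) * hM
  rw [fTilde_eq_mul_of_roots hα.ne hr1 hr2] at hroot
  have h1 : S l1 l2 l3 l4 - α1 * T l1 l2 l3 l4 ≠ 0 := (sub_pos.2 (h.alpha1_mul_T_lt_S hα hr1 hr2)).ne'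
  have h2 := (mul_eq_zero.1 hroot).resolve_left (mul_ne_zero h.sq_sub_sq_sq_pos.ne' h1)
  linear_combination h2

theorem one_le_alpha2 (h : Admissible l1 l2 l3 l4) (hα : α1 < α2)
    (hr1 : fTilde l1 l2 l3 l4 α1 1 = 0) (hr2 : fTilde l1 l2 l3 l4 α2 1 = 0)
    (hc : l1^2 + l4^2 = l2^2 + l3^2) : 1 ≤ α2 := by
  have hroot : fTilde l1 l2 l3 l4 1 1 = 0 := by
    unfold fTilde
    linear_combination (l1^2 + l4^2 - l2^2 - l3^2) * hc
  rw [fTilde_eq_mul_of_roots hα.ne hr1 hr2, mul_one, mul_one] at hroot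
  rcases mul_eq_zero.1 hroot with h1 | h2
  · have := (mul_eq_zero.1 h1).resolve_left h.sq_sub_sq_sq_pos.ne'
    linarith
  · linarith

theorem S_mul_sub_T_mul_pos_or_fTilde_neg (h : Admissible l1 l2 l3 l4) (hα : α1 < α2)
    (hr1 : fTilde l1 l2 l3 l4 α1 1 = 0) (hr2 : fTilde l1 l2 l3 l4 α2 1 = 0)
    {A B : ℝ} (hA : 0 < A) (hB : B < α2 * A) :
    0 < S l1 l2 l3 l4 * A - T l1 l2 l3 l4 * B
      ∨ l1 * l4 ≠ l2 * l3 ∧ fTilde l1 l2 l3 l4 B A < 0 := by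
  by_cases hM : l1 * l4 = l2 * l3
  · left
    rw [h.S_eq_alpha2_mul_T hα hr1 hr2 hM]
    linarith [mul_pos h.T_pos (sub_pos.2 hB)]
  rcases lt_or_ge 0 (S l1 l2 l3 l4 * A - T l1 l2 l3 l4 * B) with hX | hX
  · exact Or.inl hX
  refine Or.inr ⟨hM, ?_⟩
  have hB1 : 0 < B - α1 * A := by
    have : 0 < T l1 l2 l3 l4 * (B - α1 * A) := by
      linarith [mul_pos hA (sub_pos.2 (h.alpha1_mul_T_lt_S hα hr1 hr2))]
    exact pos_of_mul_pos_right this h.T_pos.le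
  rw [fTilde_eq_mul_of_roots hα.ne hr1 hr2]
  exact mul_neg_of_pos_of_neg (mul_pos h.sq_sub_sq_sq_pos hB1) (by linarith)

end Admissible

end SO4

theorem so4_spectral_instability
    (l1 l2 l3 l4 : ℝ) (h12 : l2 < l1) (h23 : l3 < l2) (h34 : l4 < l3)
    (s12 : 0 < l1 + l2) (s13 : 0 < l1 + l3) (s14 : 0 < l1 + l4)
    (s23 : 0 < l2 + l3) (s24 : 0 < l2 + l4) (s34 : 0 < l3 + l4)
    (a b : ℝ) (ha : a ≠ 0) (hba : b ^ 2 < a ^ 2)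
    (E1 E2 S T u v w : ℝ)
    (hE1 : E1 = (l1^2 + l2*l3) * (l4^2 + l2*l3) - l1*l4 * (l2 + l3)^2)
    (hE2 : E2 = -((l2^2 + l1*l4) * (l3^2 + l1*l4)) + l2*l3 * (l1 + l4)^2)
    (hS : S = (l2 + l3)^2 * E2) (hT : T = (l1 + l4)^2 * E1)
    (hu : u = (l1+l2)*(l1+l3)*(l1+l4)^4*(l2+l3)^4*(l2+l4)*(l3+l4))
    (hv : v = -2*(l1+l4)^2*(l2+l3)^2*(S*a^2 - T*b^2))
    (hw : w = (l1-l2)*(l1-l3)*(l2-l4)*(l3-l4)*((l2+l3)^2*a^2 - (l1+l4)^2*b^2)^2)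
    (α1 α2 : ℝ) (hα : α1 < α2)
    (hr1 : (l1^2 - l4^2)^2 * α1 ^ 2
        - 2 * ((l1^2 - l2^2) * (l3^2 - l4^2) + (l1^2 - l3^2) * (l2^2 - l4^2)) * α1
        + (l2^2 - l3^2)^2 = 0)
    (hr2 : (l1^2 - l4^2)^2 * α2 ^ 2
        - 2 * ((l1^2 - l2^2) * (l3^2 - l4^2) + (l1^2 - l3^2) * (l2^2 - l4^2)) * α2
        + (l2^2 - l3^2)^2 = 0)
    (hcase : l1 ^ 2 + l4 ^ 2 = l2 ^ 2 + l3 ^ 2 ∨ b ^ 2 < α2 * a ^ 2) :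
    ∃ z : ℂ, (u : ℂ) * z ^ 4 + (v : ℂ) * z ^ 2 + (w : ℂ) = 0 ∧ 0 < z.re := by
  have hl : SO4.Admissible l1 l2 l3 l4 := ⟨h12, h23, h34, s12, s13, s14, s23, s24, s34⟩
  have hf1 : SO4.fTilde l1 l2 l3 l4 α1 1 = 0 := by unfold SO4.fTilde; linear_combination hr1
  have hf2 : SO4.fTilde l1 l2 l3 l4 α2 1 = 0 := by unfold SO4.fTilde; linear_combination hr2
  have hA : 0 < a ^ 2 := by positivity
  have hb : b ^ 2 < α2 * a ^ 2 := hcase.elim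
    (fun hc => hba.trans_le (le_mul_of_one_le_left hA.le (hl.one_le_alpha2 hα hf1 hf2 hc))) id
  obtain rfl : S = SO4.S l1 l2 l3 l4 := by rw [hS, hE2]; rfl
  obtain rfl : T = SO4.T l1 l2 l3 l4 := by rw [hT, hE1]; rfl
  subst hu hv hw
  refine exists_biquadratic_root_re_pos hl.u_pos ?_
  rcases hl.S_mul_sub_T_mul_pos_or_fTilde_neg hα hf1 hf2 hA hb with hX | ⟨hM, hF⟩
  · left
    have : 0 < (l1 + l4)^2 * (l2 + l3)^2 := by positivity
    linarith [mul_pos this hX]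
  · right
    rw [SO4.discrim_eq]
    have : 0 < 4 * ((l1 + l4) * (l2 + l3))^6 * (l1 * l4 - l2 * l3)^2 := by
      have := sub_ne_zero.2 hM
      positivity
    exact mul_neg_of_pos_of_neg this hF
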